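/- Let d : [0,∞) → (0,∞) be continuous non-decreasing with d ≥ d₀ > 0, I(s) = ∫₀ˢ d(t) dt, h : [0,∞) → ℝ differentiable with h' < 0, and γ ∈ ℝ with γ + h(s₀) ≥ 0 for some s₀ > 0. Then for every s ∈ (0, s₀] with γ + h(s) ≥ 0, the strict inequality ((γ + h(s))·s)/I(s) > (γ + h(s))/d(s) + (s·h'(s))/d(s) holds. -/
import Mathlib


theorem stmt_4 (d : ℝ → ℝ) (d₀ : ℝ) (hd₀ : 0 < d₀)
    (hcont : ContinuousOn d (Set.Ici 0))
    (hmono : MonotoneOn d (Set.Ici 0))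
    (hlb : ∀ s ∈ Set.Ici (0 : ℝ), d₀ ≤ d s)
    (I : ℝ → ℝ) (hI : ∀ s, I s = ∫ t in (0 : ℝ)..s, d t)
    (h h' : ℝ → ℝ)
    (hderiv : ∀ s ≥ (0 : ℝ), HasDerivAt h (h' s) s)
    (hneg : ∀ s ≥ (0 : ℝ), h' s < 0)
    (γ s₀ : ℝ) (hs₀ : 0 < s₀) (hγ : 0 ≤ γ + h s₀) :
    ∀ s, 0 < s → s ≤ s₀ → 0 ≤ γ + h s →
      (γ + h s) / d s + s * h' s / d s < (γ + h s) * s / I s := by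
  intro s hs hss₀ ha
  have hds : 0 < d s := lt_of_lt_of_le hd₀ (hlb s (le_of_lt hs))
  have hint : IntervalIntegrable d MeasureTheory.volume 0 s := by
    apply ContinuousOn.intervalIntegrable
    apply hcont.mono
    rw [Set.uIcc_of_le hs.le]
    exact fun x hx => hx.1
  -- I s ≥ d₀ * s > 0
  have hIlb : d₀ * s ≤ I s := by
    rw [hI s]
    have := intervalIntegral.integral_mono_on hs.le
      (intervalIntegrable_const (c := d₀)) hint
      (fun x hx => hlb x hx.1)
    simpa [mul_comm] using this
  have hIpos : 0 < I s := lt_of_lt_of_le (by positivity) hIlb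
  -- I s ≤ d s * s
  have hIub : I s ≤ d s * s := by
    rw [hI s]
    have := intervalIntegral.integral_mono_on hs.le hint
      (intervalIntegrable_const (c := d s))
      (fun x hx => hmono hx.1 hs.le hx.2)
    simpa [mul_comm] using this
  have h1 : (γ + h s) / d s ≤ (γ + h s) * s / I s := by
    rw [div_le_div_iff₀ hds hIpos]
    calc (γ + h s) * I s ≤ (γ + h s) * (d s * s) := by
          exact mul_le_mul_of_nonneg_left hIub ha
      _ = (γ + h s) * s * d s := by ring
  have h2 : s * h' s / d s < 0 :=
    div_neg_of_neg_of_pos (mul_neg_of_pos_of_neg hs (hneg s hs.le)) hds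
  linarith
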